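/- Let $Z$ take values in $\{-1,+1\}$ with $p = \mathbb{P}(Z=+1) \in (0,1)$, and let $S:\mathcal{X}^2 \to [0,1]$ and $S^*:\mathcal{X}^2\to\{0,1\}$, $S^* = \mathbb{I}_{\mathcal{R}^*_\alpha}$ with $\mathcal{R}^*_\alpha = \{\eta > Q\}$. Define $R^+(S) = \mathbb{E}[S(X,X') \mid Z=+1]$ and $R^-(S) = \mathbb{E}[S(X,X') \mid Z=-1]$, where $\mathbb{P}(Z=+1 \mid X,X') = \eta(X,X')$. Then $\int_0^1 \mathbb{E}\big[|\eta(X,X')-Q|\,\mathbb{I}\{(X,X') \in \mathcal{R}_{S,u} \ominus \mathcal{R}^*_\alpha\}\big]\,du = (1-Q)\,p\,(R^+(S^*) - R^+(S)) + Q\,(1-p)\,(R^-(S) - R^-(S^*))$, where $\mathcal{R}_{S,u} = \{(x,x'): S(x,x') \ge u\}$. -/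

import Mathlib

/-!
Pointwise, `|η - Q| 𝟙{A ∆ {η > Q}} = (η - Q) (𝟙{η > Q} - 𝟙_A)`: the sign of `η - Q` decides on
which side of the symmetric difference a point lies. With `A = {S ≥ u}`, integrating first in
`u ∈ (0, 1]` (Fubini) turns `𝟙{S ≥ u}` into `S` (layer cake), leaving `𝔼[(η - Q)(S* - S)]`, and
`η - Q = (1 - Q) η - Q (1 - η)` splits this into the two weighted risk differences.
-/

open MeasureTheory Set

theorem abs_sub_mul_indicator_symmDiff_lt {α : Type*} (f : α → ℝ) (c : ℝ) (A : Set α) (x : α) :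
    |f x - c| * (symmDiff A {y | c < f y}).indicator (fun _ => (1 : ℝ)) x
      = (f x - c) * ({y | c < f y}.indicator (fun _ => 1) x - A.indicator (fun _ => 1) x) := by
  by_cases hA : x ∈ A <;> by_cases hc : c < f x
  · simp [Set.mem_symmDiff, hA, hc]
  · simp [Set.mem_symmDiff, hA, hc, abs_of_nonpos (sub_nonpos.2 (not_lt.1 hc))]
  · simp [Set.mem_symmDiff, hA, hc, abs_of_pos (sub_pos.2 hc)]
  · simp [Set.mem_symmDiff, hA, hc]

theorem intervalIntegral_indicator_Iic_of_mem_Icc {t : ℝ} (ht : t ∈ Icc (0 : ℝ) 1) :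
    ∫ u in (0 : ℝ)..1, (Iic t).indicator (fun _ => (1 : ℝ)) u = t := by
  rw [intervalIntegral.integral_of_le zero_le_one, integral_indicator_const _ measurableSet_Iic,
    measureReal_restrict_apply measurableSet_Iic, Iic_inter_Ioc_of_le ht.2,
    Real.volume_real_Ioc_of_le ht.1, sub_zero, smul_eq_mul, mul_one]

theorem abs_sub_le_one_of_mem_Icc {a b : ℝ} (ha : a ∈ Icc (0 : ℝ) 1) (hb : b ∈ Icc (0 : ℝ) 1) :
    |a - b| ≤ 1 :=
  abs_sub_le_iff.2 ⟨by linarith [ha.2, hb.1], by linarith [ha.1, hb.2]⟩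

theorem indicator_one_mem_Icc {α : Type*} (s : Set α) (x : α) :
    s.indicator (fun _ => (1 : ℝ)) x ∈ Icc (0 : ℝ) 1 := by
  by_cases hx : x ∈ s <;> simp [hx]

theorem intervalIntegral_integral_mul_sub_indicator_le {α : Type*} [MeasurableSpace α]
    {μ : Measure α} [IsFiniteMeasure μ] {g h S : α → ℝ} (hg : Integrable g μ)
    (hh : Measurable h) (hh01 : ∀ x, h x ∈ Icc (0 : ℝ) 1)
    (hS : Measurable S) (hS01 : ∀ x, S x ∈ Icc (0 : ℝ) 1) :
    ∫ u in (0 : ℝ)..1, ∫ x, g x * (h x - {y | u ≤ S y}.indicator (fun _ => (1 : ℝ)) x) ∂μ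
      = ∫ x, g x * (h x - S x) ∂μ := by
  have hind : Measurable fun p : ℝ × α => {y | p.1 ≤ S y}.indicator (fun _ => (1 : ℝ)) p.2 :=
    measurable_const.indicator (measurableSet_le measurable_fst (hS.comp measurable_snd))
  have : IsFiniteMeasure (volume.restrict (uIoc (0 : ℝ) 1)) :=
    isFiniteMeasure_restrict.2 (by simp)
  have hint : Integrable (Function.uncurry fun (u : ℝ) (x : α) =>
      g x * (h x - {y | u ≤ S y}.indicator (fun _ => (1 : ℝ)) x))
      ((volume.restrict (uIoc 0 1)).prod μ) :=
    (hg.comp_snd _).mul_bdd ((hh.comp measurable_snd).sub hind).aestronglyMeasurable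
      (ae_of_all _ fun p => abs_sub_le_one_of_mem_Icc (hh01 p.2) (indicator_one_mem_Icc _ _))
  rw [intervalIntegral_integral_swap hint]
  refine integral_congr_ae (ae_of_all _ fun x => ?_)
  change ∫ u in (0 : ℝ)..1, g x * (h x - (Iic (S x)).indicator (fun _ => (1 : ℝ)) u) = _
  have hIic : IntervalIntegrable ((Iic (S x)).indicator fun _ => (1 : ℝ)) volume 0 1 :=
    intervalIntegrable_iff.2 ((integrable_const 1).indicator measurableSet_Iic)
  rw [intervalIntegral.integral_const_mul, intervalIntegral.integral_sub intervalIntegrable_const hIic,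
    intervalIntegral.integral_const, intervalIntegral_indicator_Iic_of_mem_Icc (hS01 x)]
  simp

theorem MeasureTheory.Integrable.mul_of_mem_Icc_left {α : Type*} [MeasurableSpace α]
    {μ : Measure α} {f g : α → ℝ} (hg : Integrable g μ) (hf : Measurable f)
    (hf01 : ∀ x, f x ∈ Icc (0 : ℝ) 1) : Integrable (fun x => f x * g x) μ :=
  hg.bdd_mul hf.aestronglyMeasurable (ae_of_all _ fun x => by
    rw [Real.norm_eq_abs, abs_of_nonneg (hf01 x).1]; exact (hf01 x).2)

section FiniteMeasure

variable {α : Type*} [MeasurableSpace α] {μ : Measure α} [IsFiniteMeasure μ]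

theorem integrable_of_mem_Icc {f : α → ℝ} (hf : Measurable f) (hf01 : ∀ x, f x ∈ Icc (0 : ℝ) 1) :
    Integrable f μ :=
  .of_bound hf.aestronglyMeasurable 1 (ae_of_all _ fun x => by
    rw [Real.norm_eq_abs, abs_of_nonneg (hf01 x).1]; exact (hf01 x).2)

theorem integral_sub_const_mul_sub {η f g : α → ℝ} (hη : Measurable η)
    (hη01 : ∀ x, η x ∈ Icc (0 : ℝ) 1) (hf : Measurable f) (hf01 : ∀ x, f x ∈ Icc (0 : ℝ) 1)
    (hg : Measurable g) (hg01 : ∀ x, g x ∈ Icc (0 : ℝ) 1) (Q : ℝ) :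
    ∫ x, (η x - Q) * (f x - g x) ∂μ
      = (1 - Q) * (∫ x, f x * η x ∂μ - ∫ x, g x * η x ∂μ)
        + Q * (∫ x, g x * (1 - η x) ∂μ - ∫ x, f x * (1 - η x) ∂μ) := by
  have hη_int : Integrable η μ := integrable_of_mem_Icc hη hη01
  have hη' : Integrable (fun x => 1 - η x) μ := (integrable_const 1).sub hη_int
  have hfη := hη_int.mul_of_mem_Icc_left hf hf01
  have hgη := hη_int.mul_of_mem_Icc_left hg hg01
  have hfη' := hη'.mul_of_mem_Icc_left hf hf01
  have hgη' := hη'.mul_of_mem_Icc_left hg hg01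
  have hsplit : ∀ x, (η x - Q) * (f x - g x)
      = (1 - Q) * (f x * η x - g x * η x) + Q * (g x * (1 - η x) - f x * (1 - η x)) :=
    fun x => by ring
  simp_rw [hsplit]
  rw [integral_add, integral_const_mul, integral_const_mul, integral_sub hfη hgη,
    integral_sub hgη' hfη']
  exacts [((hfη.sub hgη).const_mul _), ((hgη'.sub hfη').const_mul _)]

end FiniteMeasure

theorem excess_risk_reformulation_general {𝒳 : Type*} [MeasurableSpace 𝒳]
    (ν : Measure (𝒳 × 𝒳)) [IsProbabilityMeasure ν]
    (η : 𝒳 × 𝒳 → ℝ) (hη : Measurable η) (hη01 : ∀ q, η q ∈ Set.Icc (0 : ℝ) 1)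
    (Q : ℝ)
    (S : 𝒳 × 𝒳 → ℝ) (hS : Measurable S) (hS01 : ∀ q, S q ∈ Set.Icc (0 : ℝ) 1) :
    let p : ℝ := ∫ q, η q ∂ν
    let Sstar : 𝒳 × 𝒳 → ℝ := Set.indicator {q | Q < η q} (fun _ => (1 : ℝ))
    let Rp : (𝒳 × 𝒳 → ℝ) → ℝ := fun f => (∫ q, f q * η q ∂ν) / p
    let Rm : (𝒳 × 𝒳 → ℝ) → ℝ := fun f => (∫ q, f q * (1 - η q) ∂ν) / (1 - p)
    0 < p → p < 1 →
    (∫ u in (0:ℝ)..1, ∫ q, |η q - Q|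
        * Set.indicator (symmDiff {q' | u ≤ S q'} {q' | Q < η q'}) (fun _ => (1 : ℝ)) q ∂ν)
      = (1 - Q) * p * (Rp Sstar - Rp S) + Q * (1 - p) * (Rm S - Rm Sstar) := by
  intro p Sstar Rp Rm hp0 hp1
  have hSstar : Measurable Sstar := measurable_const.indicator (measurableSet_lt measurable_const hη)
  calc _ = ∫ u in (0 : ℝ)..1, ∫ q, (η q - Q)
          * (Sstar q - {q' | u ≤ S q'}.indicator (fun _ => (1 : ℝ)) q) ∂ν := by
        simp_rw [abs_sub_mul_indicator_symmDiff_lt]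
        rfl
    _ = ∫ q, (η q - Q) * (Sstar q - S q) ∂ν :=
        intervalIntegral_integral_mul_sub_indicator_le
          ((integrable_of_mem_Icc hη hη01).sub (integrable_const Q)) hSstar
          (indicator_one_mem_Icc _) hS hS01
    _ = (1 - Q) * (∫ q, Sstar q * η q ∂ν - ∫ q, S q * η q ∂ν)
          + Q * (∫ q, S q * (1 - η q) ∂ν - ∫ q, Sstar q * (1 - η q) ∂ν) :=
        integral_sub_const_mul_sub hη hη01 hSstar (indicator_one_mem_Icc _) hS hS01 Q
    _ = _ := by
        simp only [Rp, Rm, ← sub_div]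
        rw [mul_assoc, mul_div_cancel₀ _ hp0.ne', mul_assoc, mul_div_cancel₀ _ (sub_ne_zero.2 hp1.ne')]

/-- Excess-risk reformulation. With `ν` the law of `(X,X')`, `η(X,X') = ℙ(Z = +1 ∣ X,X')`,
`p = 𝔼[η(X,X')] ∈ (0,1)`, `Q ∈ (0,1)` a threshold with `ℙ(η(X,X') = Q) = 0`,
`S* = 𝟙{η > Q}`, `R⁺(S) = 𝔼[S ∣ Z = +1]` and `R⁻(S) = 𝔼[S ∣ Z = -1]`:
`∫₀¹ 𝔼[|η - Q| 𝟙{(X,X') ∈ R_{S,u} ∆ R*}] du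
  = (1-Q) p (R⁺(S*) - R⁺(S)) + Q (1-p) (R⁻(S) - R⁻(S*))`,
where `R_{S,u} = {S ≥ u}` and `R* = {η > Q}`. -/
theorem excess_risk_reformulation {𝒳 : Type*} [MeasurableSpace 𝒳]
    (ν : Measure (𝒳 × 𝒳)) [IsProbabilityMeasure ν]
    (η : 𝒳 × 𝒳 → ℝ) (hη : Measurable η) (hη01 : ∀ q, η q ∈ Set.Icc (0 : ℝ) 1)
    (Q : ℝ) (hQ : Q ∈ Set.Ioo (0 : ℝ) 1) (hnoatom : ν {q | η q = Q} = 0)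
    (S : 𝒳 × 𝒳 → ℝ) (hS : Measurable S) (hS01 : ∀ q, S q ∈ Set.Icc (0 : ℝ) 1) :
    let p : ℝ := ∫ q, η q ∂ν
    let Sstar : 𝒳 × 𝒳 → ℝ := Set.indicator {q | Q < η q} (fun _ => (1 : ℝ))
    let Rp : (𝒳 × 𝒳 → ℝ) → ℝ := fun f => (∫ q, f q * η q ∂ν) / p
    let Rm : (𝒳 × 𝒳 → ℝ) → ℝ := fun f => (∫ q, f q * (1 - η q) ∂ν) / (1 - p)
    0 < p → p < 1 →
    (∫ u in (0:ℝ)..1, ∫ q, |η q - Q|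
        * Set.indicator (symmDiff {q' | u ≤ S q'} {q' | Q < η q'}) (fun _ => (1 : ℝ)) q ∂ν)
      = (1 - Q) * p * (Rp Sstar - Rp S) + Q * (1 - p) * (Rm S - Rm Sstar) :=
  excess_risk_reformulation_general ν η hη hη01 Q S hS hS01
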